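/- arXiv:2108.00542 — 5 statements merged into one kernel-verified Lean document; each statement's English description precedes it below -/
import Mathlib

section
/- Every election profile P has at least one Stable Voting winner, i.e., SV(P) is nonempty. -/
/-- An election profile: a finite set of candidates and, for each voter,
a strict linear order (ballot) on the candidates.  `ballot v a b = true`
means that voter `v` ranks candidate `a` above candidate `b`. -/
structure Profile (C V : Type) [DecidableEq C] [Fintype V] where
  cands : Finset C
  ballot : V → C → C → Bool
  ballot_irrefl : ∀ v a, a ∈ cands → ballot v a a = false
  ballot_asymm_total : ∀ v a b, a ∈ cands → b ∈ cands → a ≠ b →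
    (ballot v a b = true ↔ ¬ ballot v b a = true)
  ballot_trans : ∀ v a b c, a ∈ cands → b ∈ cands → c ∈ cands →
    ballot v a b = true → ballot v b c = true → ballot v a c = true

variable {C V : Type} [DecidableEq C] [Fintype V]

/-- The margin of `a` vs. `b`: the number of voters ranking `a` above `b`
minus the number of voters ranking `b` above `a`. -/
def Profile.margin (P : Profile C V) (a b : C) : ℤ :=
  ((Finset.univ.filter fun v => P.ballot v a b = true).card : ℤ) -
  ((Finset.univ.filter fun v => P.ballot v b a = true).card : ℤ)

/-- The restriction of a profile to a subset `S` of the candidates. -/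
def Profile.restrict (P : Profile C V) (S : Finset C) : Profile C V where
  cands := P.cands ∩ S
  ballot := P.ballot
  ballot_irrefl := fun v a ha => P.ballot_irrefl v a (Finset.mem_inter.mp ha).1
  ballot_asymm_total := fun v a b ha hb => P.ballot_asymm_total v a b
    (Finset.mem_inter.mp ha).1 (Finset.mem_inter.mp hb).1
  ballot_trans := fun v a b c ha hb hc => P.ballot_trans v a b c
    (Finset.mem_inter.mp ha).1 (Finset.mem_inter.mp hb).1 (Finset.mem_inter.mp hc).1

/-- The profile `P₋B` obtained from `P` by removing candidate `b` from all ballots. -/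
def Profile.remove (P : Profile C V) (b : C) : Profile C V :=
  P.restrict (P.cands.erase b)

/-- Auxiliary, fuel-based definition of the Stable Voting winners. -/
def SVaux : ℕ → Profile C V → Set C
  | 0, P => ↑P.cands
  | n + 1, P =>
    if P.cands.card ≤ 1 then ↑P.cands
    else { a | ∃ b ∈ P.cands, b ≠ a ∧ a ∈ SVaux n (P.remove b) ∧
      ∀ x ∈ P.cands, ∀ y ∈ P.cands, x ≠ y → x ∈ SVaux n (P.remove y) →
        P.margin x y ≤ P.margin a b }

/-- The set of Stable Voting winners of a profile.  If there is a single
candidate, that candidate wins; otherwise `a` is a winner iff there is a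
candidate `b ≠ a` such that `a` is a Stable Voting winner after removing `b`
and the margin of `a` vs. `b` is maximal among margins of pairs `(x, y)` of
distinct candidates such that `x` is a Stable Voting winner after removing `y`. -/
def SV (P : Profile C V) : Set C := SVaux P.cands.card P

/-- `a` beats `b` head-to-head: the margin of `a` vs. `b` is positive. -/
def Profile.beats (P : Profile C V) (a b : C) : Prop := 0 < P.margin a b

/-- A Condorcet winner: a candidate beating every other candidate head-to-head. -/
def CondorcetWinner (P : Profile C V) (a : C) : Prop :=
  a ∈ P.cands ∧ ∀ b ∈ P.cands, b ≠ a → P.beats a b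

/-- `S` is a nonempty set of candidates each of whose members beats each
nonmember head-to-head. -/
def Dominant (P : Profile C V) (S : Finset C) : Prop :=
  S ⊆ P.cands ∧ S.Nonempty ∧ ∀ a ∈ S, ∀ b ∈ P.cands, b ∉ S → P.beats a b

/-- `S` is the Smith set of `P`: the smallest nonempty set of candidates each
of whose members beats each nonmember head-to-head. -/
def IsSmith (P : Profile C V) (S : Finset C) : Prop :=
  Dominant P S ∧ ∀ T, Dominant P T → S ⊆ T

/-- A profile is uniquely weighted if distinct ordered pairs of distinct
candidates have distinct margins. -/
def UniquelyWeighted (P : Profile C V) : Prop :=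
  ∀ a b a' b', a ∈ P.cands → b ∈ P.cands → a' ∈ P.cands → b' ∈ P.cands →
    a ≠ b → a' ≠ b' → (a, b) ≠ (a', b') → P.margin a b ≠ P.margin a' b'

/-- `a` is stable for SV in `P`: there is a candidate `b` whom `a` beats
head-to-head such that `a` is a Stable Voting winner in `P₋b`. -/
def StableFor (P : Profile C V) (a : C) : Prop :=
  ∃ b ∈ P.cands, P.beats a b ∧ a ∈ SV (P.remove b)


lemma remove_cands (P : Profile C V) (b : C) :
    (P.remove b).cands = P.cands.erase b := by
  simp [Profile.remove, Profile.restrict,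
    Finset.inter_eq_right.mpr (Finset.erase_subset _ _)]

lemma SVaux_subset : ∀ (n : ℕ) (P : Profile C V), SVaux n P ⊆ ↑P.cands := by
  intro n
  induction n with
  | zero => intro P; exact subset_rfl
  | succ n ih =>
    intro P a ha
    simp only [SVaux] at ha
    split at ha
    · exact ha
    · obtain ⟨b, hb, hba, haS, _⟩ := ha
      have h2 := ih (P.remove b) haS
      rw [remove_cands] at h2
      exact Finset.mem_coe.mpr (Finset.mem_of_mem_erase (Finset.mem_coe.mp h2))

lemma svaux_nonempty : ∀ (n : ℕ) (P : Profile C V), P.cands.Nonempty →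
    P.cands.card = n → (SVaux n P).Nonempty := by
  intro n
  induction n with
  | zero =>
    intro P h hc
    obtain ⟨x, hx⟩ := h
    exact ⟨x, Finset.mem_coe.mpr hx⟩
  | succ n ih =>
    intro P h hc
    classical
    by_cases h1 : P.cands.card ≤ 1
    · obtain ⟨x, hx⟩ := h
      refine ⟨x, ?_⟩
      simp only [SVaux, if_pos h1]
      exact Finset.mem_coe.mpr hx
    · push_neg at h1
      set F := (P.cands ×ˢ P.cands).filter
        (fun p => p.1 ≠ p.2 ∧ p.1 ∈ SVaux n (P.remove p.2)) with hF
      have hFne : F.Nonempty := by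
        obtain ⟨y, hy⟩ := h
        have hcard : (P.remove y).cands.card = n := by
          rw [remove_cands, Finset.card_erase_of_mem hy, hc]; omega
        have hne : (P.remove y).cands.Nonempty := by
          rw [← Finset.card_pos, hcard]; omega
        obtain ⟨x, hx⟩ := ih (P.remove y) hne hcard
        have hxc := SVaux_subset n _ hx
        rw [remove_cands] at hxc
        have hxc' := Finset.mem_coe.mp hxc
        refine ⟨(x, y), Finset.mem_filter.mpr ⟨?_, ?_, hx⟩⟩
        · exact Finset.mem_product.mpr ⟨Finset.mem_of_mem_erase hxc', hy⟩
        · exact Finset.ne_of_mem_erase hxc'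
      obtain ⟨p, hp, hmax⟩ := F.exists_max_image (fun p => P.margin p.1 p.2) hFne
      obtain ⟨hmem, hne', hSV⟩ := Finset.mem_filter.mp hp
      have hp2 : p.2 ∈ P.cands := (Finset.mem_product.mp hmem).2
      refine ⟨p.1, ?_⟩
      simp only [SVaux, if_neg (by omega : ¬ P.cands.card ≤ 1)]
      refine ⟨p.2, hp2, hne'.symm, hSV, ?_⟩
      intro x hx y hy hxy hxS
      exact hmax (x, y) (Finset.mem_filter.mpr
        ⟨Finset.mem_product.mpr ⟨hx, hy⟩, hxy, hxS⟩)

/-- Every profile has at least one Stable Voting winner. -/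
theorem sv_nonempty (P : Profile C V) (h : P.cands.Nonempty) :
    (SV P).Nonempty := svaux_nonempty P.cands.card P h rfl
end

section
/- In any election profile P with exactly three candidates, a candidate A is a Stable Voting winner if and only if one of the following holds: (1) no candidate beats A head-to-head, and the maximum of Margin_P(A,Y) over candidates Y ≠ A is greater than or equal to Margin_P(X',Y') for every candidate X' that no candidate beats head-to-head and every candidate Y' ≠ X'; or (2) each of the three candidates is beaten head-to-head by exactly one candidate, and the margin by which the candidate beating A beats A is minimal among all positive margins in P. -/
variable {C V : Type} [DecidableEq C] [Fintype V]

lemma margin_self (P : Profile C V) (a : C) : P.margin a a = 0 := by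
  simp [Profile.margin]

lemma margin_rev (P : Profile C V) (a b : C) : P.margin b a = -P.margin a b := by
  simp only [Profile.margin]; ring

lemma remove_margin (P : Profile C V) (b : C) : (P.remove b).margin = P.margin := rfl

lemma mem_svaux_succ {n : ℕ} {P : Profile C V} (h : ¬ P.cands.card ≤ 1) (a : C) :
    a ∈ SVaux (n+1) P ↔ ∃ b ∈ P.cands, b ≠ a ∧ a ∈ SVaux n (P.remove b) ∧
      ∀ x ∈ P.cands, ∀ y ∈ P.cands, x ≠ y → x ∈ SVaux n (P.remove y) →
        P.margin x y ≤ P.margin a b := by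
  rw [SVaux]
  simp [h]

lemma mem_svaux_small {n : ℕ} {P : Profile C V} (h : P.cands.card ≤ 1) (a : C) :
    a ∈ SVaux n P ↔ a ∈ P.cands := by
  cases n with
  | zero => rw [SVaux]; simp
  | succ n => rw [SVaux]; simp [h]


lemma mem_svaux_two {P : Profile C V} {a b : C} (h2 : P.cands = {a, b}) (hab : a ≠ b) :
    a ∈ SVaux 2 P ↔ 0 ≤ P.margin a b := by
  have ha : a ∈ P.cands := by rw [h2]; simp
  have hb : b ∈ P.cands := by rw [h2]; simp
  have hcard : P.cands.card = 2 := by rw [h2]; exact Finset.card_pair hab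
  rw [mem_svaux_succ (by omega)]
  have hsmall : ∀ y ∈ P.cands, ∀ x : C,
      (x ∈ SVaux 1 (P.remove y) ↔ x ∈ P.cands ∧ x ≠ y) := by
    intro y hy x
    rw [mem_svaux_small (by
      rw [remove_cands, Finset.card_erase_of_mem hy, hcard]), remove_cands,
      Finset.mem_erase]
    tauto
  constructor
  · rintro ⟨c, hc, hca, _, hmax⟩
    have hcb : c = b := by
      rw [h2, Finset.mem_insert, Finset.mem_singleton] at hc
      tauto
    subst hcb
    have := hmax c hb a ha hab.symm ((hsmall a ha c).mpr ⟨hb, hab.symm⟩)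
    rw [margin_rev] at this
    omega
  · intro hm
    refine ⟨b, hb, hab.symm, (hsmall b hb a).mpr ⟨ha, hab⟩, ?_⟩
    intro x hx y hy hxy _
    rw [h2, Finset.mem_insert, Finset.mem_singleton] at hx hy
    rcases hx with rfl | rfl <;> rcases hy with rfl | rfl
    · exact absurd rfl hxy
    · exact le_refl _
    · rw [margin_rev]; omega
    · exact absurd rfl hxy

lemma filter_card_one {a b c : C} (hab : a ≠ b) (hac : a ≠ c) (hbc : b ≠ c)
    (p : C → Prop) [DecidablePred p] :
    (({a,b,c} : Finset C).filter p).card = 1 ↔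
      ((p a ∧ ¬ p b ∧ ¬ p c) ∨ (¬ p a ∧ p b ∧ ¬ p c) ∨ (¬ p a ∧ ¬ p b ∧ p c)) := by
  rw [Finset.filter_insert, Finset.filter_insert, Finset.filter_singleton]
  by_cases ha : p a <;> by_cases hb : p b <;> by_cases hc : p c <;>
    simp [ha, hb, hc, hab, hac, hbc]

set_option maxHeartbeats 2000000 in
/-- Characterization of Stable Voting winners in a
three-candidate election. -/
theorem sv_three_candidates_characterization (P : Profile C V) (A : C)
    (h3 : P.cands.card = 3) (hA : A ∈ P.cands) :
    A ∈ SV P ↔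
      ((∀ B ∈ P.cands, ¬ P.beats B A) ∧
        ∃ Y ∈ P.cands, Y ≠ A ∧ ∀ X' ∈ P.cands, ∀ Y' ∈ P.cands,
          (∀ Z ∈ P.cands, ¬ P.beats Z X') → Y' ≠ X' →
            P.margin X' Y' ≤ P.margin A Y) ∨
      ((∀ Z ∈ P.cands, (P.cands.filter fun W => 0 < P.margin W Z).card = 1) ∧
        ∀ W ∈ P.cands, P.beats W A →
          ∀ X' ∈ P.cands, ∀ Y' ∈ P.cands, P.beats X' Y' →
            P.margin W A ≤ P.margin X' Y') := by
  obtain ⟨B, D, hBD, hBDeq⟩ := Finset.card_eq_two.mp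
    (show (P.cands.erase A).card = 2 by rw [Finset.card_erase_of_mem hA, h3])
  have hBmem : B ∈ P.cands.erase A := by rw [hBDeq]; simp
  have hDmem : D ∈ P.cands.erase A := by rw [hBDeq]; simp
  have hBA : B ≠ A := (Finset.mem_erase.mp hBmem).1
  have hDA : D ≠ A := (Finset.mem_erase.mp hDmem).1
  have hAB : A ≠ B := hBA.symm
  have hAD : A ≠ D := hDA.symm
  have hDB : D ≠ B := hBD.symm
  have hc : P.cands = {A, B, D} := by rw [← hBDeq, Finset.insert_erase hA]
  have eA : P.cands.erase A = {B, D} := hBDeq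
  have eB : P.cands.erase B = {A, D} := by
    rw [hc, Finset.erase_insert_of_ne hAB, Finset.erase_insert (by simp [hBD])]
  have eD : P.cands.erase D = {A, B} := by
    rw [hc, Finset.erase_insert_of_ne hAD, Finset.erase_insert_of_ne hBD,
      Finset.erase_singleton]
    rfl
  -- two-candidate evaluations
  have k1 : A ∈ SVaux 2 (P.remove B) ↔ 0 ≤ P.margin A D :=
    (mem_svaux_two ((remove_cands P B).trans eB) hAD).trans (by rw [remove_margin])
  have k2 : A ∈ SVaux 2 (P.remove D) ↔ 0 ≤ P.margin A B :=
    (mem_svaux_two ((remove_cands P D).trans eD) hAB).trans (by rw [remove_margin])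
  have k3 : B ∈ SVaux 2 (P.remove A) ↔ 0 ≤ P.margin B D :=
    (mem_svaux_two ((remove_cands P A).trans eA) hBD).trans (by rw [remove_margin])
  have k4 : B ∈ SVaux 2 (P.remove D) ↔ 0 ≤ P.margin B A := by
    have h2 : (P.remove D).cands = {B, A} := by
      rw [remove_cands, eD, Finset.pair_comm]
    exact (mem_svaux_two h2 hBA).trans (by rw [remove_margin])
  have k5 : D ∈ SVaux 2 (P.remove A) ↔ 0 ≤ P.margin D B := by
    have h2 : (P.remove A).cands = {D, B} := by
      rw [remove_cands, eA, Finset.pair_comm]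
    exact (mem_svaux_two h2 hDB).trans (by rw [remove_margin])
  have k6 : D ∈ SVaux 2 (P.remove B) ↔ 0 ≤ P.margin D A := by
    have h2 : (P.remove B).cands = {D, A} := by
      rw [remove_cands, eB, Finset.pair_comm]
    exact (mem_svaux_two h2 hDA).trans (by rw [remove_margin])
  have hSV : SV P = SVaux (2+1) P := by unfold SV; rw [h3]
  rw [hSV, mem_svaux_succ (by omega)]
  simp only [hc, Profile.beats, Finset.mem_insert, Finset.mem_singleton,
    forall_eq_or_imp, forall_eq, exists_eq_or_imp, exists_eq_left,
    filter_card_one hAB hAD hBD, k1, k2, k3, k4, k5, k6, margin_self, ne_eq,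
    hAB, hAD, hBD, hBA, hDA, hDB, not_false_eq_true, not_true, lt_self_iff_false,
    false_implies, true_implies, false_and, and_false, true_and, and_true,
    false_or, or_false, not_false_iff, implies_true, forall_true_left]
  rw [show P.margin B A = -P.margin A B from margin_rev P A B,
    show P.margin D B = -P.margin B D from margin_rev P B D,
    show P.margin A D = -P.margin D A from margin_rev P D A]
  generalize P.margin A B = m1
  generalize P.margin B D = m2
  generalize P.margin D A = m3
  constructor <;> intro h <;> omega
end

section
/- For every election profile P with at least two candidates, if some candidate is stable for SV in P, then every Stable Voting winner in P is stable for SV in P. -/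
variable {C V : Type} [DecidableEq C] [Fintype V]

/-- If some candidate is stable for SV in `P`, then every
Stable Voting winner in `P` is stable for SV in `P`. -/
theorem sv_winners_stable (P : Profile C V)
    (h2 : 2 ≤ P.cands.card) (h : ∃ A ∈ P.cands, StableFor P A) :
    ∀ A ∈ SV P, StableFor P A := by
  obtain ⟨A₀, hA₀c, B₀, hB₀c, hbeats, hsv⟩ := h
  intro A hA
  have hne : A₀ ≠ B₀ := by
    rintro rfl
    simp [Profile.beats, Profile.margin] at hbeats
  obtain ⟨n, hn⟩ : ∃ n, P.cands.card = n + 1 := ⟨P.cands.card - 1, by omega⟩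
  rw [SV, hn] at hA
  simp only [SVaux] at hA
  rw [if_neg (by omega)] at hA
  obtain ⟨b, hbc, hba, hAsv, hmax⟩ := hA
  have hfuel : ∀ c ∈ P.cands, SV (P.remove c) = SVaux n (P.remove c) := by
    intro c hc
    have hcard : (P.cands.erase c).card = n := by
      rw [Finset.card_erase_of_mem hc]; omega
    rw [SV, remove_cands, hcard]
  have h0 : A₀ ∈ SVaux n (P.remove B₀) := by
    rw [← hfuel B₀ hB₀c]; exact hsv
  have hle := hmax A₀ hA₀c B₀ hB₀c hne h0
  exact ⟨b, hbc, lt_of_lt_of_le hbeats hle, by rw [hfuel b hbc]; exact hAsv⟩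
end

section
/- For any election profile P, there exists a unique subset S of the candidates such that S is nonempty, every candidate in S beats every candidate outside S head-to-head, and S is contained in every nonempty set of candidates each of whose members beats each nonmember head-to-head; this S is the Smith set of P. -/
variable {C V : Type} [DecidableEq C] [Fintype V]

/-- Every profile has a unique Smith set: a unique nonempty set
of candidates each of whose members beats each nonmember head-to-head and
which is contained in every such set. -/
theorem smith_set_exists_unique (P : Profile C V) (h : P.cands.Nonempty) :
    ∃! S : Finset C, IsSmith P S := by
  classical
  -- Any two dominant sets are comparable by inclusion.
  have comp : ∀ S T : Finset C, Dominant P S → Dominant P T → S ⊆ T ∨ T ⊆ S := by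
    intro S T hS hT
    by_cases hst : S ⊆ T
    · exact Or.inl hst
    · right
      obtain ⟨a, haS, haT⟩ := Finset.not_subset.mp hst
      intro b hbT
      by_contra hbS
      have h1 : P.beats a b := hS.2.2 a haS b (hT.1 hbT) hbS
      have h2 : P.beats b a := hT.2.2 b hbT a (hS.1 haS) haT
      have hmab : P.margin a b = - P.margin b a := by
        unfold Profile.margin; ring
      unfold Profile.beats at h1 h2
      rw [hmab] at h1
      linarith
  -- The collection of dominant sets is nonempty and finite: pick a minimal one.
  set D := P.cands.powerset.filter (fun T => Dominant P T) with hD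
  have hPD : P.cands ∈ D := by
    refine Finset.mem_filter.mpr ⟨Finset.mem_powerset.mpr (Finset.Subset.refl _), ?_⟩
    exact ⟨Finset.Subset.refl _, h, fun a _ b hb hnb => absurd hb hnb⟩
  obtain ⟨S, hSD, hmin⟩ := D.exists_min_image Finset.card ⟨P.cands, hPD⟩
  have hSdom : Dominant P S := (Finset.mem_filter.mp hSD).2
  have hSmith : IsSmith P S := by
    refine ⟨hSdom, fun T hT => ?_⟩
    have hTD : T ∈ D :=
      Finset.mem_filter.mpr ⟨Finset.mem_powerset.mpr hT.1, hT⟩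
    rcases comp S T hSdom hT with hst | hts
    · exact hst
    · have : T = S := Finset.eq_of_subset_of_card_le hts (hmin T hTD)
      exact this ▸ Finset.Subset.refl _
  exact ⟨S, hSmith, fun S' hS' =>
    Finset.Subset.antisymm (hS'.2 S hSmith.1) (hSmith.2 S' hS'.1)⟩
end

section
/- Let P be an election profile with at least two candidates and B a candidate that is not a Condorcet winner in P. If a candidate A belongs to the Smith set of P_{-B}, then A belongs to the Smith set of P. -/
variable {C V : Type} [DecidableEq C] [Fintype V]

/-- If `B` is not a Condorcet winner in `P` and `A` belongs to
the Smith set of `P₋B`, then `A` belongs to the Smith set of `P`. -/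
theorem smith_set_lift (P : Profile C V) (A B : C) (S S' : Finset C)
    (h2 : 2 ≤ P.cands.card) (hB : B ∈ P.cands)
    (hnc : ¬ CondorcetWinner P B)
    (hS' : IsSmith (P.remove B) S') (hS : IsSmith P S)
    (hA : A ∈ S') :
    A ∈ S := by
  have hsub : S' ⊆ S.erase B := by
    apply hS'.2
    refine ⟨?_, ?_, ?_⟩
    · intro x hx
      have hxS := Finset.mem_of_mem_erase hx
      have hxB := Finset.ne_of_mem_erase hx
      have hxc := hS.1.1 hxS
      simp [Profile.remove, Profile.restrict, Finset.mem_inter, Finset.mem_erase, hxB, hxc]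
    · by_contra h
      rw [Finset.not_nonempty_iff_eq_empty, Finset.erase_eq_empty_iff] at h
      rcases h with h | h
      · exact absurd (h ▸ hS.1.2.1) (by simp)
      · apply hnc
        refine ⟨hB, fun b hb hbB => ?_⟩
        have hbS : b ∉ S := by simp [h, hbB]
        exact hS.1.2.2 B (by simp [h]) b hb hbS
    · intro a ha b hb hbn
      have haS := Finset.mem_of_mem_erase ha
      simp only [Profile.remove, Profile.restrict, Finset.mem_inter, Finset.mem_erase] at hb
      have hbS : b ∉ S := fun hmem => hbn (Finset.mem_erase.mpr ⟨hb.2.1, hmem⟩)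
      exact hS.1.2.2 a haS b hb.1 hbS
  exact Finset.mem_of_mem_erase (hsub hA)
end
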